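/- Let k be a field and let F ∈ k[x,y,z] be a homogeneous cubic form. Then the monomial xyz divides the Caylean determinant D(F) := det of the 3×3 matrix whose rows are the gradient (∂F/∂x, ∂F/∂y, ∂F/∂z) evaluated respectively at (0,z,−y), (−z,0,x), and (y,−x,0). In particular the Caylean P(F) := −D(F)/(xyz) is a well-defined polynomial (a ternary cubic form). -/

import Mathlib

open MvPolynomial

noncomputable section

section Aux

variable {k : Type*} [Field k]

/-- Substituting `0` for `X i` kills `X i`-divisibility witnesses; conversely,
if the substitution gives `0` then `X i` divides. -/
lemma X_dvd_of_aeval_eq_zero (i : Fin 3) (p : MvPolynomial (Fin 3) k)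
    (h : aeval (fun j => if j = i then (0 : MvPolynomial (Fin 3) k) else X j) p = 0) :
    X i ∣ p := by
  have key : ∀ q : MvPolynomial (Fin 3) k,
      X i ∣ q - aeval (fun j => if j = i then (0 : MvPolynomial (Fin 3) k) else X j) q := by
    intro q
    induction q using MvPolynomial.induction_on with
    | C a => simp
    | add p q hp hq =>
        rw [map_add]
        have : p + q - (aeval (fun j => if j = i then (0 : MvPolynomial (Fin 3) k) else X j) p +
            aeval (fun j => if j = i then (0 : MvPolynomial (Fin 3) k) else X j) q)
            = (p - aeval (fun j => if j = i then (0 : MvPolynomial (Fin 3) k) else X j) p) +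
              (q - aeval (fun j => if j = i then (0 : MvPolynomial (Fin 3) k) else X j) q) := by
          ring
        rw [this]
        exact dvd_add hp hq
    | mul_X p j hp =>
        rw [map_mul, aeval_X]
        by_cases hj : j = i
        · subst hj
          simp only [if_pos, mul_zero, sub_zero]
          exact Dvd.intro_left p rfl
        · rw [if_neg hj]
          have : p * X j - aeval (fun j' => if j' = i then (0 : MvPolynomial (Fin 3) k)
              else X j') p * X j
              = (p - aeval (fun j' => if j' = i then (0 : MvPolynomial (Fin 3) k) else X j') p)
                * X j := by ring
          rw [this]
          exact Dvd.dvd.mul_right hp _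
  have := key p
  rwa [h, sub_zero] at this

lemma degree_sub_single {d : Fin 3 →₀ ℕ} {i : Fin 3} (hd : d i ≠ 0) :
    (d - Finsupp.single i 1).degree + 1 = d.degree := by
  have hle : Finsupp.single i 1 ≤ d := by
    rw [Finsupp.single_le_iff]
    omega
  have h1 : (d - Finsupp.single i 1) + Finsupp.single i 1 = d := tsub_add_cancel_of_le hle
  have h2 : (Finsupp.single i 1 : Fin 3 →₀ ℕ).degree = 1 := by
    rw [Finsupp.degree_apply, Finsupp.support_single_ne_zero _ one_ne_zero, Finset.sum_singleton,
      Finsupp.single_eq_same]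
  calc (d - Finsupp.single i 1).degree + 1
      = (d - Finsupp.single i 1).degree + (Finsupp.single i 1 : Fin 3 →₀ ℕ).degree := by rw [h2]
    _ = ((d - Finsupp.single i 1) + Finsupp.single i 1).degree := by
        simp only [Finsupp.degree_eq_weight_one, map_add]
    _ = d.degree := by rw [h1]

lemma pderiv_isHomogeneous {F : MvPolynomial (Fin 3) k} {n : ℕ}
    (hF : F.IsHomogeneous (n + 1)) (i : Fin 3) : (pderiv i F).IsHomogeneous n := by
  classical
  rw [F.as_sum, map_sum]
  apply MvPolynomial.IsHomogeneous.sum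
  intro d hd
  rw [pderiv_monomial]
  by_cases h : d i = 0
  · rw [h, Nat.cast_zero, mul_zero, monomial_zero]
    exact isHomogeneous_zero _ _ _
  · apply isHomogeneous_monomial
    have hdeg : d.degree = n + 1 := by
      have := hF (mem_support_iff.mp hd)
      rw [Finsupp.degree_eq_weight_one]; exact this
    have := degree_sub_single (d := d) (i := i) h
    omega

/-- Evaluating a homogeneous polynomial at a point supported in one coordinate. -/
lemma aeval_ite_homogeneous {p : MvPolynomial (Fin 3) k} {n : ℕ}
    (hp : p.IsHomogeneous n) (i : Fin 3) (t : MvPolynomial (Fin 3) k) :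
    aeval (fun j => if j = i then t else 0) p
      = C (coeff (Finsupp.single i n) p) * t ^ n := by
  classical
  rw [aeval_def, eval₂_eq]
  rw [Finset.sum_eq_single (Finsupp.single i n)]
  · by_cases hn : n = 0
    · subst hn
      simp [algebraMap_eq]
    · rw [Finsupp.support_single_ne_zero _ hn, Finset.prod_singleton, if_pos rfl,
        Finsupp.single_eq_same, algebraMap_eq]
  · intro d hd hne
    have hdeg : d.degree = n := by
      have := hp (mem_support_iff.mp hd)
      rw [Finsupp.degree_eq_weight_one]; exact this
    have : ∃ j, j ≠ i ∧ d j ≠ 0 := by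
      by_contra hc
      push_neg at hc
      apply hne
      ext j
      by_cases hj : j = i
      · subst hj
        rw [Finsupp.single_eq_same, ← hdeg, Finsupp.degree_apply]
        rw [Finset.sum_eq_single j]
        · intro b hb hbj
          by_contra hb0
          exact hbj (by by_contra h'; exact hb0 (hc b h'))
        · intro h'
          simpa using Finsupp.notMem_support_iff.mp h'
      · rw [Finsupp.single_eq_of_ne' (Ne.symm hj)]
        exact hc j hj
    obtain ⟨j, hji, hdj⟩ := this
    have hmem : j ∈ d.support := Finsupp.mem_support_iff.mpr hdj
    rw [Finset.prod_eq_zero hmem, mul_zero]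
    rw [if_neg hji]
    exact zero_pow hdj
  · intro hns
    rw [notMem_support_iff.mp hns]
    simp

lemma prime_X_mv (i : Fin 3) : Prime (X i : MvPolynomial (Fin 3) k) := by
  have h0 : Prime (X 0 : MvPolynomial (Fin 3) k) := by
    rw [← MulEquiv.prime_iff (finSuccEquiv k 2).toMulEquiv]
    have hX0 : (finSuccEquiv k 2).toMulEquiv (X 0) = Polynomial.X := finSuccEquiv_X_zero
    rw [hX0]
    exact Polynomial.prime_X
  have hpr := (MulEquiv.prime_iff (renameEquiv k (Equiv.swap (0 : Fin 3) i)).toMulEquiv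
    (p := (X 0 : MvPolynomial (Fin 3) k))).mpr h0
  have hX : (renameEquiv k (Equiv.swap (0 : Fin 3) i)).toMulEquiv (X 0) = X i := by
    show rename (Equiv.swap (0 : Fin 3) i) (X 0) = X i
    simp
  rwa [hX] at hpr

end Aux

/-- The Caylean determinant of a ternary cubic form `F`: the determinant of the 3×3 matrix
whose rows are the gradient `(∂F/∂x, ∂F/∂y, ∂F/∂z)` evaluated at `(0,z,-y)`, `(-z,0,x)`,
`(y,-x,0)` respectively. -/
def cayleanDet {k : Type*} [Field k] (F : MvPolynomial (Fin 3) k) : MvPolynomial (Fin 3) k :=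
  (Matrix.of fun i j : Fin 3 =>
    aeval (![![0, X 2, -X 1], ![-X 2, 0, X 0], ![X 1, -X 0, 0]] i) (pderiv j F)).det

section Main

variable {k : Type*} [Field k]

lemma X_dvd_cayleanDet (F : MvPolynomial (Fin 3) k) (hF : F.IsHomogeneous 3) (i : Fin 3) :
    (X i : MvPolynomial (Fin 3) k) ∣ cayleanDet F := by
  classical
  have hpd : ∀ j : Fin 3, (pderiv j F).IsHomogeneous 2 := fun j =>
    pderiv_isHomogeneous (n := 2) hF j
  apply X_dvd_of_aeval_eq_zero i
  set f : MvPolynomial (Fin 3) k →ₐ[k] MvPolynomial (Fin 3) k :=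
    aeval (fun j => if j = i then (0 : MvPolynomial (Fin 3) k) else X j) with hf
  show f _ = 0
  unfold cayleanDet
  rw [AlgHom.map_det, AlgHom.mapMatrix_apply]
  set M : Matrix (Fin 3) (Fin 3) (MvPolynomial (Fin 3) k) :=
    (Matrix.of fun a j : Fin 3 =>
      aeval (![![0, X 2, -X 1], ![-X 2, 0, X 0], ![X 1, -X 0, 0]] a) (pderiv j F)).map f with hM
  -- entries of the mapped matrix
  have hentry : ∀ a j : Fin 3, M a j
      = aeval (fun s => f (![![0, X 2, -X 1], ![-X 2, 0, X 0], ![X 1, -X 0, 0]] a s))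
          (pderiv j F) := by
    intro a j
    rw [hM, Matrix.map_apply, Matrix.of_apply, comp_aeval_apply]
  fin_cases i
  · -- i = 0 : rows 1 and 2 are proportional
    have h1 : ∀ j : Fin 3, M 1 j = C (coeff (Finsupp.single 0 2) (pderiv j F)) * (-X 2) ^ 2 := by
      intro j
      rw [hentry 1 j]
      have : (fun s => f (![![0, X 2, -X 1], ![-X 2, 0, X 0], ![X 1, -X 0, 0]] 1 s))
          = fun s : Fin 3 => if s = 0 then -X 2 else 0 := by
        funext s
        fin_cases s <;> simp [hf]
      rw [this, aeval_ite_homogeneous (hpd j)]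
    have h2 : ∀ j : Fin 3, M 2 j = C (coeff (Finsupp.single 0 2) (pderiv j F)) * (X 1) ^ 2 := by
      intro j
      rw [hentry 2 j]
      have : (fun s => f (![![0, X 2, -X 1], ![-X 2, 0, X 0], ![X 1, -X 0, 0]] 2 s))
          = fun s : Fin 3 => if s = 0 then X 1 else 0 := by
        funext s
        fin_cases s <;> simp [hf]
      rw [this, aeval_ite_homogeneous (hpd j)]
    rw [Matrix.det_fin_three, h1 0, h1 1, h1 2, h2 0, h2 1, h2 2]
    ring
  · -- i = 1 : rows 0 and 2 are proportional
    have h1 : ∀ j : Fin 3, M 0 j = C (coeff (Finsupp.single 1 2) (pderiv j F)) * (X 2) ^ 2 := by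
      intro j
      rw [hentry 0 j]
      have : (fun s => f (![![0, X 2, -X 1], ![-X 2, 0, X 0], ![X 1, -X 0, 0]] 0 s))
          = fun s : Fin 3 => if s = 1 then X 2 else 0 := by
        funext s
        fin_cases s <;> simp [hf]
      rw [this, aeval_ite_homogeneous (hpd j)]
    have h2 : ∀ j : Fin 3, M 2 j = C (coeff (Finsupp.single 1 2) (pderiv j F)) * (-X 0) ^ 2 := by
      intro j
      rw [hentry 2 j]
      have : (fun s => f (![![0, X 2, -X 1], ![-X 2, 0, X 0], ![X 1, -X 0, 0]] 2 s))
          = fun s : Fin 3 => if s = 1 then -X 0 else 0 := by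
        funext s
        fin_cases s <;> simp [hf]
      rw [this, aeval_ite_homogeneous (hpd j)]
    rw [Matrix.det_fin_three, h1 0, h1 1, h1 2, h2 0, h2 1, h2 2]
    ring
  · -- i = 2 : rows 0 and 1 are proportional
    have h1 : ∀ j : Fin 3, M 0 j = C (coeff (Finsupp.single 2 2) (pderiv j F)) * (-X 1) ^ 2 := by
      intro j
      rw [hentry 0 j]
      have : (fun s => f (![![0, X 2, -X 1], ![-X 2, 0, X 0], ![X 1, -X 0, 0]] 0 s))
          = fun s : Fin 3 => if s = 2 then -X 1 else 0 := by
        funext s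
        fin_cases s <;> simp [hf]
      rw [this, aeval_ite_homogeneous (hpd j)]
    have h2 : ∀ j : Fin 3, M 1 j = C (coeff (Finsupp.single 2 2) (pderiv j F)) * (X 0) ^ 2 := by
      intro j
      rw [hentry 1 j]
      have : (fun s => f (![![0, X 2, -X 1], ![-X 2, 0, X 0], ![X 1, -X 0, 0]] 1 s))
          = fun s : Fin 3 => if s = 2 then X 0 else 0 := by
        funext s
        fin_cases s <;> simp [hf]
      rw [this, aeval_ite_homogeneous (hpd j)]
    rw [Matrix.det_fin_three, h1 0, h1 1, h1 2, h2 0, h2 1, h2 2]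
    ring

end Main

/-- for a homogeneous cubic form `F`, the monomial `xyz` divides the Caylean
determinant `D(F)`, so that the Caylean `P(F) = -D(F)/(xyz)` is a well-defined polynomial. -/
theorem xyz_dvd_cayleanDet {k : Type*} [Field k]
    (F : MvPolynomial (Fin 3) k) (hF : F.IsHomogeneous 3) :
    (X 0 * X 1 * X 2 : MvPolynomial (Fin 3) k) ∣ cayleanDet F := by
  have h0 := X_dvd_cayleanDet F hF 0
  have h1 := X_dvd_cayleanDet F hF 1
  have h2 := X_dvd_cayleanDet F hF 2
  obtain ⟨a, ha⟩ := h0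
  have h01 : ¬ (X 1 : MvPolynomial (Fin 3) k) ∣ X 0 := by
    rw [X_dvd_X]; decide
  have h02 : ¬ (X 2 : MvPolynomial (Fin 3) k) ∣ X 0 := by
    rw [X_dvd_X]; decide
  have h12 : ¬ (X 2 : MvPolynomial (Fin 3) k) ∣ X 1 := by
    rw [X_dvd_X]; decide
  have h1a : (X 1 : MvPolynomial (Fin 3) k) ∣ a :=
    ((prime_X_mv 1).dvd_or_dvd (ha ▸ h1)).resolve_left h01
  obtain ⟨b, hb⟩ := h1a
  have h2b : (X 2 : MvPolynomial (Fin 3) k) ∣ b := by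
    have : (X 2 : MvPolynomial (Fin 3) k) ∣ X 0 * (X 1 * b) := by
      rw [← hb, ← ha]; exact h2
    rcases (prime_X_mv 2).dvd_or_dvd this with h | h
    · exact absurd h h02
    · rcases (prime_X_mv 2).dvd_or_dvd h with h' | h'
      · exact absurd h' h12
      · exact h'
  obtain ⟨c, hc⟩ := h2b
  exact ⟨c, by rw [ha, hb, hc]; ring⟩

end
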